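/- arXiv:2306.16027 — 3 statements merged into one kernel-verified Lean document; each statement's English description precedes it below -/
import Mathlib

section
/- Let G be a connected hypergraph with spectral radius ρ and positive principal eigenvector X. Let e_0 = {v_1, v_2, ..., v_k} be an edge of size k ≥ 3 such that deg(v_2) = deg(v_3) = ··· = deg(v_{k−1}) = 1, and suppose there exist edges e_1, e_2 with e_1 ∩ e_0 = {v_1} and e_2 ∩ e_0 = {v_k}. Then X_{v_2} = X_{v_3} = ··· = X_{v_{k−1}} = (X_{v_1} + X_{v_k}) / ((k−1)ρ − (k−3)), and this common value is strictly less than min{X_{v_1}, X_{v_k}}. -/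
open Matrix BigOperators

/-- A hypergraph on vertex set `Fin n`: a set of edges, each an at-least-2-element
vertex subset. -/
structure FinHypergraph (n : ℕ) where
  edges : Finset (Finset (Fin n))
  two_le_card : ∀ e ∈ edges, 2 ≤ e.card

namespace FinHypergraph

variable {n : ℕ}

/-- The adjacency matrix `(A_G)_{ij} = Σ_{e ∋ i,j} 1/(|e|-1)` for `i ≠ j`, zero diagonal. -/
noncomputable def adjMat (G : FinHypergraph n) : Matrix (Fin n) (Fin n) ℝ :=
  fun i j => if i = j then 0 else
    ∑ e ∈ G.edges.filter (fun e => i ∈ e ∧ j ∈ e), (1 : ℝ) / ((e.card : ℝ) - 1)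

/-- `G` is `k`-uniform if every edge has exactly `k` vertices. -/
def IsUniform (G : FinHypergraph n) (k : ℕ) : Prop := ∀ e ∈ G.edges, e.card = k

/-- Degree of a vertex: the number of edges containing it. -/
def degree (G : FinHypergraph n) (v : Fin n) : ℕ := (G.edges.filter (fun e => v ∈ e)).card

/-- Connectivity: any two vertices are linked by a walk of overlapping edges. -/
def Connected (G : FinHypergraph n) : Prop :=
  ∀ i j : Fin n, Relation.ReflTransGen (fun a b => ∃ e ∈ G.edges, a ∈ e ∧ b ∈ e) i j

/-- Every vertex lies in some edge (no isolated vertices, so the order is `n`). -/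
def Covers (G : FinHypergraph n) : Prop := ∀ v : Fin n, ∃ e ∈ G.edges, v ∈ e

/-- A pendant edge attached at `v`: all its vertices other than `v` have degree 1. -/
def IsPendantAt (G : FinHypergraph n) (e : Finset (Fin n)) (v : Fin n) : Prop :=
  e ∈ G.edges ∧ v ∈ e ∧ ∀ u ∈ e, u ≠ v → G.degree u = 1

/-- `v, e` (indices modulo `q`) form a hypercycle of length `q ≥ 2` in `G`:
distinct vertices, distinct edges, `v i, v (i+1) ∈ e i`, consecutive edges meet
exactly in the shared vertex (when `q ≥ 3`), non-consecutive edges are disjoint. -/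
def IsCycle (G : FinHypergraph n) (q : ℕ) (v : ℕ → Fin n) (e : ℕ → Finset (Fin n)) : Prop :=
  2 ≤ q ∧
  (∀ i < q, ∀ j < q, v i = v j → i = j) ∧
  (∀ i < q, ∀ j < q, e i = e j → i = j) ∧
  (∀ i < q, e i ∈ G.edges) ∧
  (∀ i < q, v i ∈ e i ∧ v ((i + 1) % q) ∈ e i) ∧
  (3 ≤ q → ∀ i < q, e i ∩ e ((i + 1) % q) = {v ((i + 1) % q)}) ∧
  (∀ i < q, ∀ j < q, i ≠ j → (i + 1) % q ≠ j → (j + 1) % q ≠ i → e i ∩ e j = ∅)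

/-- `G` contains a hypercycle. -/
def HasCycle (G : FinHypergraph n) : Prop :=
  ∃ (q : ℕ) (v : ℕ → Fin n) (e : ℕ → Finset (Fin n)), IsCycle G q v e

end FinHypergraph

open FinHypergraph

/-- `G` is a `k`-uniform unicyclic hypergraph of order `n`: connected with
`n - 1 = (k-1)m - 1`. -/
def IsUnicyclic (k : ℕ) {n : ℕ} (G : FinHypergraph n) : Prop :=
  G.IsUniform k ∧ G.Connected ∧
    (n : ℤ) - 1 = ((k : ℤ) - 1) * (G.edges.card : ℤ) - 1

/-- Isomorphism of two hypergraphs on the same vertex set. -/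
def Isomorphic {n : ℕ} (G H : FinHypergraph n) : Prop :=
  ∃ σ : Equiv.Perm (Fin n), ∀ e : Finset (Fin n), e ∈ G.edges ↔ e.image σ ∈ H.edges

/-- The permutation matrix of `σ`, so that `(P_σ X) i = X (σ⁻¹ i)`. -/
def permMat {n : ℕ} (σ : Equiv.Perm (Fin n)) : Matrix (Fin n) (Fin n) ℝ :=
  fun i j => if σ j = i then 1 else 0

/-- `σ` is an automorphism of `G`. -/
def IsAuto {n : ℕ} (G : FinHypergraph n) (σ : Equiv.Perm (Fin n)) : Prop :=
  ∀ e : Finset (Fin n), e ∈ G.edges ↔ e.image σ ∈ G.edges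

/-- The spectral radius of a real matrix: the largest modulus of a (real) eigenvalue. -/
noncomputable def specRad {n : ℕ} (A : Matrix (Fin n) (Fin n) ℝ) : ℝ :=
  ⨆ μ : spectrum ℝ A, |(μ : ℝ)|

/-- The hypergraph `U*`: a 2-hypercycle on `v₁, v₂` (two edges meeting exactly in
`{v₁, v₂}`) with all remaining edges pendant edges attached at `v₁`. -/
def IsUstar (k : ℕ) {n : ℕ} (G : FinHypergraph n) : Prop :=
  G.IsUniform k ∧ G.Covers ∧
  ∃ v1 v2 : Fin n, v1 ≠ v2 ∧ ∃ e1 ∈ G.edges, ∃ e2 ∈ G.edges, e1 ≠ e2 ∧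
    e1 ∩ e2 = {v1, v2} ∧
    ∀ e ∈ G.edges, e ≠ e1 → e ≠ e2 → G.IsPendantAt e v1

/-- The hypergraph `F`: a 2-hypercycle on `v₁, v₂`, one pendant edge at `v₂`,
all remaining edges pendant at `v₁`. -/
def IsF (k : ℕ) {n : ℕ} (G : FinHypergraph n) : Prop :=
  G.IsUniform k ∧ G.Covers ∧
  ∃ v1 v2 : Fin n, v1 ≠ v2 ∧ ∃ e1 ∈ G.edges, ∃ e2 ∈ G.edges, e1 ≠ e2 ∧
    e1 ∩ e2 = {v1, v2} ∧
    ∃ f ∈ G.edges, f ≠ e1 ∧ f ≠ e2 ∧ G.IsPendantAt f v2 ∧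
      ∀ e ∈ G.edges, e ≠ e1 → e ≠ e2 → e ≠ f → G.IsPendantAt e v1

/-- The hypergraph `F₁`: a 2-hypercycle on `v₁, v₂`, all remaining edges pendant at
a vertex `η ∈ e₂ \ {v₁, v₂}`. -/
def IsF1 (k : ℕ) {n : ℕ} (G : FinHypergraph n) : Prop :=
  G.IsUniform k ∧ G.Covers ∧
  ∃ v1 v2 η : Fin n, v1 ≠ v2 ∧ ∃ e1 ∈ G.edges, ∃ e2 ∈ G.edges, e1 ≠ e2 ∧
    e1 ∩ e2 = {v1, v2} ∧ η ∈ e2 ∧ η ≠ v1 ∧ η ≠ v2 ∧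
    ∀ e ∈ G.edges, e ≠ e1 → e ≠ e2 → G.IsPendantAt e η

/-- The hypergraph `F₂`: a 2-hypercycle on `v₁, v₂`, one pendant edge at `v₁`, all
remaining edges pendant at a vertex `η ∈ e₂ \ {v₁, v₂}`. -/
def IsF2 (k : ℕ) {n : ℕ} (G : FinHypergraph n) : Prop :=
  G.IsUniform k ∧ G.Covers ∧
  ∃ v1 v2 η : Fin n, v1 ≠ v2 ∧ ∃ e1 ∈ G.edges, ∃ e2 ∈ G.edges, e1 ≠ e2 ∧
    e1 ∩ e2 = {v1, v2} ∧ η ∈ e2 ∧ η ≠ v1 ∧ η ≠ v2 ∧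
    ∃ f ∈ G.edges, f ≠ e1 ∧ f ≠ e2 ∧ G.IsPendantAt f v1 ∧
      ∀ e ∈ G.edges, e ≠ e1 → e ≠ e2 → e ≠ f → G.IsPendantAt e η

/-- The hypergraph `F₃`: a 2-hypercycle on `v₁, v₂`, one pendant edge at a vertex
`η ∈ e₂ \ {v₁, v₂}`, all remaining edges pendant at `v₁`. -/
def IsF3 (k : ℕ) {n : ℕ} (G : FinHypergraph n) : Prop :=
  G.IsUniform k ∧ G.Covers ∧
  ∃ v1 v2 η : Fin n, v1 ≠ v2 ∧ ∃ e1 ∈ G.edges, ∃ e2 ∈ G.edges, e1 ≠ e2 ∧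
    e1 ∩ e2 = {v1, v2} ∧ η ∈ e2 ∧ η ≠ v1 ∧ η ≠ v2 ∧
    ∃ f ∈ G.edges, f ≠ e1 ∧ f ≠ e2 ∧ G.IsPendantAt f η ∧
      ∀ e ∈ G.edges, e ≠ e1 → e ≠ e2 → e ≠ f → G.IsPendantAt e v1

/-- The hypergraph `F_(R;S;T)`: a 2-hypercycle on `v₁, v₂` with every remaining edge
a pendant edge attached at some vertex of `e₁ ∪ e₂`. -/
def IsFRST (k : ℕ) {n : ℕ} (G : FinHypergraph n) : Prop :=
  G.IsUniform k ∧ G.Covers ∧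
  ∃ v1 v2 : Fin n, v1 ≠ v2 ∧ ∃ e1 ∈ G.edges, ∃ e2 ∈ G.edges, e1 ≠ e2 ∧
    e1 ∩ e2 = {v1, v2} ∧
    ∀ e ∈ G.edges, e ≠ e1 → e ≠ e2 → ∃ w ∈ e1 ∪ e2, G.IsPendantAt e w

/-- if `e₀ = {v₁, …, v_k}` has all interior vertices of degree 1 and
edges `e₁, e₂` meet `e₀` exactly in `v₁` resp. `v_k`, then the interior entries of
the Perron vector equal `(X v₁ + X v_k)/((k-1)ρ - (k-3)) < min (X v₁) (X v_k)`. -/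
theorem stmt5 {n k : ℕ} (hk : 3 ≤ k) (G : FinHypergraph n) (hconn : G.Connected)
    (huni : G.IsUniform k)
    (X : Fin n → ℝ) (hpos : ∀ i, 0 < X i) (hunit : ∑ i, X i ^ 2 = 1)
    (hX : G.adjMat *ᵥ X = specRad G.adjMat • X)
    (e0 : Finset (Fin n)) (he0 : e0 ∈ G.edges)
    (v1 vk : Fin n) (hne : v1 ≠ vk) (hv1 : v1 ∈ e0) (hvk : vk ∈ e0)
    (hdeg1 : ∀ w ∈ e0, w ≠ v1 → w ≠ vk → G.degree w = 1)
    (e1 : Finset (Fin n)) (he1 : e1 ∈ G.edges) (hi1 : e1 ∩ e0 = {v1})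
    (e2 : Finset (Fin n)) (he2 : e2 ∈ G.edges) (hi2 : e2 ∩ e0 = {vk}) :
    ∀ w ∈ e0, w ≠ v1 → w ≠ vk →
      X w = (X v1 + X vk) / (((k : ℝ) - 1) * specRad G.adjMat - ((k : ℝ) - 3)) ∧
      X w < min (X v1) (X vk) := by

  intro w hw hwv1 hwvk
  set ρ := specRad G.adjMat with hρdef
  set S := ∑ u ∈ e0, X u with hSdef
  have hk3 : (3:ℝ) ≤ (k:ℝ) := by exact_mod_cast hk
  have hc : (0:ℝ) < (k:ℝ) - 1 := by linarith
  -- adjacency entries are nonneg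
  have hA_nonneg : ∀ i j, 0 ≤ G.adjMat i j := by
    intro i j
    simp only [FinHypergraph.adjMat]
    split
    · exact le_refl 0
    · exact Finset.sum_nonneg fun e he => by
        have h2 := G.two_le_card e (Finset.mem_filter.mp he).1
        have : (1:ℝ) ≤ (e.card : ℝ) - 1 := by
          have : (2:ℝ) ≤ (e.card : ℝ) := by exact_mod_cast h2
          linarith
        positivity
  -- lower bound on entries via a common edge
  have hA_lb : ∀ (i j : Fin n), i ≠ j → ∀ e ∈ G.edges, i ∈ e → j ∈ e →
      1/((k:ℝ)-1) ≤ G.adjMat i j := by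
    intro i j hij e he hie hje
    simp only [FinHypergraph.adjMat, if_neg hij]
    have hmem : e ∈ G.edges.filter (fun e => i ∈ e ∧ j ∈ e) :=
      Finset.mem_filter.mpr ⟨he, hie, hje⟩
    have := Finset.single_le_sum (f := fun e : Finset (Fin n) => (1:ℝ)/((e.card:ℝ)-1))
      (fun f hf => by
        have h2 := G.two_le_card f (Finset.mem_filter.mp hf).1
        have : (2:ℝ) ≤ (f.card:ℝ) := by exact_mod_cast h2
        exact div_nonneg zero_le_one (by linarith)) hmem
    simpa [huni e he] using this
  -- row of the adjacency matrix at a degree-1 vertex of e0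
  have hA_row : ∀ z ∈ e0, G.degree z = 1 → ∀ u,
      G.adjMat z u = if u ∈ e0.erase z then 1/((k:ℝ)-1) else 0 := by
    intro z hz hdz u
    have hfil : G.edges.filter (fun e => z ∈ e) = {e0} := by
      obtain ⟨a, ha⟩ := Finset.card_eq_one.mp hdz
      have h1 : e0 ∈ G.edges.filter (fun e => z ∈ e) := Finset.mem_filter.mpr ⟨he0, hz⟩
      rw [ha] at h1
      rw [ha, Finset.mem_singleton.mp h1]
    simp only [FinHypergraph.adjMat]
    by_cases hzu : z = u
    · subst hzu
      simp
    · rw [if_neg hzu]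
      have hfil2 : G.edges.filter (fun e => z ∈ e ∧ u ∈ e)
          = if u ∈ e0 then {e0} else ∅ := by
        by_cases hu : u ∈ e0
        · rw [if_pos hu]
          ext e
          simp only [Finset.mem_filter, Finset.mem_singleton]
          constructor
          · rintro ⟨he, hze, hue⟩
            have : e ∈ G.edges.filter (fun e => z ∈ e) := Finset.mem_filter.mpr ⟨he, hze⟩
            rw [hfil] at this
            exact Finset.mem_singleton.mp this
          · rintro rfl
            exact ⟨he0, hz, hu⟩
        · rw [if_neg hu, Finset.eq_empty_iff_forall_notMem]
          intro e he'
          obtain ⟨he, hze, hue⟩ := Finset.mem_filter.mp he'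
          have : e ∈ G.edges.filter (fun e => z ∈ e) := Finset.mem_filter.mpr ⟨he, hze⟩
          rw [hfil] at this
          rw [Finset.mem_singleton.mp this] at hue
          exact hu hue
      rw [hfil2]
      by_cases hu : u ∈ e0
      · rw [if_pos hu, if_pos (Finset.mem_erase.mpr ⟨Ne.symm hzu, hu⟩),
          Finset.sum_singleton, huni e0 he0]
      · rw [if_neg hu, if_neg (fun h => hu (Finset.mem_of_mem_erase h)),
          Finset.sum_empty]
  -- eigen-equation at a degree-1 vertex
  have hrow : ∀ z ∈ e0, z ≠ v1 → z ≠ vk → ((k:ℝ)-1) * (ρ * X z) = S - X z := by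
    intro z hz hz1 hzk
    have hdz := hdeg1 z hz hz1 hzk
    have h1 : (G.adjMat *ᵥ X) z = ρ * X z := by rw [hX]; rfl
    have h2 : (G.adjMat *ᵥ X) z = ∑ u, G.adjMat z u * X u := rfl
    have h3 : ∑ u, G.adjMat z u * X u = ∑ u ∈ e0.erase z, X u / ((k:ℝ)-1) := by
      rw [show (fun u => G.adjMat z u * X u)
          = fun u => if u ∈ e0.erase z then X u / ((k:ℝ)-1) else 0 from funext fun u => by
        rw [hA_row z hz hdz u]
        split <;> ring]
      rw [Finset.sum_ite_mem, Finset.univ_inter]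
    have h4 : ∑ u ∈ e0.erase z, X u / ((k:ℝ)-1) = (S - X z) / ((k:ℝ)-1) := by
      rw [← Finset.sum_div, Finset.sum_erase_eq_sub hz]
    have h5 : ρ * X z = (S - X z) / ((k:ℝ)-1) := by rw [← h1, h2, h3, h4]
    field_simp at h5
    linarith
  have hroww := hrow w hw hwv1 hwvk
  -- positivity of ρ
  have hSw : 0 < S - X w := by
    have : S - X w = ∑ u ∈ e0.erase w, X u := (Finset.sum_erase_eq_sub hw).symm
    rw [this]
    exact Finset.sum_pos (fun u _ => hpos u)
      ⟨v1, Finset.mem_erase.mpr ⟨Ne.symm hwv1, hv1⟩⟩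
  have hρpos : 0 < ρ := by
    nlinarith [hpos w, mul_pos hc (hpos w)]
  -- all interior entries are equal
  have hint : ∀ z ∈ e0, z ≠ v1 → z ≠ vk → X z = X w := by
    intro z hz hz1 hzk
    have h := hrow z hz hz1 hzk
    nlinarith [hpos z, hpos w]
  -- compute S
  have hvk' : vk ∈ e0.erase v1 := Finset.mem_erase.mpr ⟨Ne.symm hne, hvk⟩
  have hcard : ((e0.erase v1).erase vk).card = k - 2 := by
    rw [Finset.card_erase_of_mem hvk', Finset.card_erase_of_mem hv1, huni e0 he0]
    omega
  have hS : S = X v1 + X vk + ((k:ℝ) - 2) * X w := by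
    have h1 : S = X v1 + ∑ u ∈ e0.erase v1, X u := (Finset.add_sum_erase e0 X hv1).symm
    have h2 : ∑ u ∈ e0.erase v1, X u = X vk + ∑ u ∈ (e0.erase v1).erase vk, X u :=
      (Finset.add_sum_erase _ X hvk').symm
    have h3 : ∑ u ∈ (e0.erase v1).erase vk, X u = ((k:ℝ) - 2) * X w := by
      rw [Finset.sum_congr rfl (fun u hu => by
        obtain ⟨huk, hu'⟩ := Finset.mem_erase.mp hu
        obtain ⟨hu1, hue⟩ := Finset.mem_erase.mp hu'
        exact hint u hue hu1 huk), Finset.sum_const, hcard, nsmul_eq_mul]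
      congr 1
      have : (2:ℕ) ≤ k := by omega
      push_cast [Nat.cast_sub this]
      ring
    rw [h1, h2, h3]; ring
  -- the main equation
  have hkey : (((k:ℝ)-1) * ρ - ((k:ℝ)-3)) * X w = X v1 + X vk := by
    nlinarith [hroww, hS]
  have hDpos : 0 < ((k:ℝ)-1) * ρ - ((k:ℝ)-3) := by
    nlinarith [hpos w, hpos v1, hpos vk]
  -- endpoint comparison
  have endpt : ∀ v ∈ e0, ∀ e', e' ∈ G.edges → e' ∩ e0 = {v} → X w < X v := by
    intro v hv e' he' hi
    have hve' : v ∈ e' := by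
      have : v ∈ e' ∩ e0 := by rw [hi]; exact Finset.mem_singleton_self v
      exact (Finset.mem_inter.mp this).1
    obtain ⟨u0, hu0e, hu0v⟩ := Finset.exists_mem_ne
      (by rw [huni e' he']; omega) v
    have hu0e0 : u0 ∉ e0 := by
      intro h
      have : u0 ∈ e' ∩ e0 := Finset.mem_inter.mpr ⟨hu0e, h⟩
      rw [hi, Finset.mem_singleton] at this
      exact hu0v this
    have hu0ner : u0 ∉ e0.erase v := fun h => hu0e0 (Finset.mem_of_mem_erase h)
    have h1 : (G.adjMat *ᵥ X) v = ρ * X v := by rw [hX]; rfl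
    have hT : ∑ u ∈ insert u0 (e0.erase v), G.adjMat v u * X u ≤ ∑ u, G.adjMat v u * X u :=
      Finset.sum_le_sum_of_subset_of_nonneg (Finset.subset_univ _)
        (fun u _ _ => mul_nonneg (hA_nonneg v u) (hpos u).le)
    have hTsum : ∑ u ∈ insert u0 (e0.erase v), G.adjMat v u * X u
        = G.adjMat v u0 * X u0 + ∑ u ∈ e0.erase v, G.adjMat v u * X u :=
      Finset.sum_insert hu0ner
    have hlb1 : 1/((k:ℝ)-1) * X u0 ≤ G.adjMat v u0 * X u0 :=
      mul_le_mul_of_nonneg_right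
        (hA_lb v u0 (Ne.symm hu0v) e' he' hve' hu0e) (hpos u0).le
    have hlb2 : ∑ u ∈ e0.erase v, 1/((k:ℝ)-1) * X u
        ≤ ∑ u ∈ e0.erase v, G.adjMat v u * X u :=
      Finset.sum_le_sum (fun u hu => by
        obtain ⟨huv, hue⟩ := Finset.mem_erase.mp hu
        exact mul_le_mul_of_nonneg_right
          (hA_lb v u (Ne.symm huv) e0 he0 hv hue) (hpos u).le)
    have hlb3 : ∑ u ∈ e0.erase v, 1/((k:ℝ)-1) * X u = (S - X v) / ((k:ℝ)-1) := by
      rw [← Finset.mul_sum, Finset.sum_erase_eq_sub hv]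
      ring
    have hmain : (S - X v) / ((k:ℝ)-1) + 1/((k:ℝ)-1) * X u0 ≤ ρ * X v := by
      rw [← h1]
      calc (S - X v) / ((k:ℝ)-1) + 1/((k:ℝ)-1) * X u0
          ≤ (∑ u ∈ e0.erase v, G.adjMat v u * X u) + G.adjMat v u0 * X u0 := by
            rw [← hlb3]; exact add_le_add hlb2 hlb1
        _ = ∑ u ∈ insert u0 (e0.erase v), G.adjMat v u * X u := by rw [hTsum]; ring
        _ ≤ ∑ u, G.adjMat v u * X u := hT
        _ = (G.adjMat *ᵥ X) v := rfl
    have hmain' : S - X v + X u0 ≤ ((k:ℝ)-1) * (ρ * X v) := by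
      have := mul_le_mul_of_nonneg_left hmain hc.le
      calc S - X v + X u0
          = ((k:ℝ)-1) * ((S - X v) / ((k:ℝ)-1) + 1/((k:ℝ)-1) * X u0) := by
            field_simp
        _ ≤ ((k:ℝ)-1) * (ρ * X v) := this
    nlinarith [hpos u0, mul_pos hc hρpos]
  refine ⟨?_, ?_⟩
  · rw [eq_div_iff (ne_of_gt hDpos)]
    linarith [hkey]
  · rw [lt_min_iff]
    exact ⟨endpt v1 hv1 e1 he1 hi1, endpt vk hvk e2 he2 hi2⟩
end

section
/- Let G = (V, E) be a connected k-uniform hypergraph with edges e = {u_1,...,u_k} and f = {v_1,...,v_k}. For 1 ≤ r ≤ k−1, set U_1 = {u_1,...,u_r}, V_1 = {v_1,...,v_r}, e' = (e \ U_1) ∪ V_1, f' = (f \ V_1) ∪ U_1, and let G' be the hypergraph with edge set (E \ {e, f}) ∪ {e', f'}. Let X be the positive principal eigenvector of G, and write x_S = Σ_{v∈S} X_v, U_2 = e \ U_1, V_2 = f \ V_1. Then XᵀA_{G'}X − XᵀA_G X = (2/(k−1))·(x_{U_1} − x_{V_1})·(x_{V_2} − x_{U_2}). Consequently, if G' is connected,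 x_{U_1} ≥ x_{V_1} and x_{U_2} ≤ x_{V_2}, then ρ(G) ≤ ρ(G'). -/
open Matrix BigOperators

open FinHypergraph

section Helpers
open Finset


lemma quadform_aux {n : ℕ} (E : Finset (Finset (Fin n))) (X : Fin n → ℝ) :
    X ⬝ᵥ ((fun i j => if i = j then (0:ℝ) else
        ∑ e ∈ E.filter (fun e => i ∈ e ∧ j ∈ e), (1 : ℝ) / ((e.card : ℝ) - 1)) *ᵥ X) =
      ∑ e ∈ E, (1 / ((e.card : ℝ) - 1)) * ((∑ v ∈ e, X v)^2 - ∑ v ∈ e, (X v)^2) := by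
  have step1 : X ⬝ᵥ ((fun i j => if i = j then (0:ℝ) else
        ∑ e ∈ E.filter (fun e => i ∈ e ∧ j ∈ e), (1 : ℝ) / ((e.card : ℝ) - 1)) *ᵥ X)
      = ∑ i, ∑ j, ∑ e ∈ E, (if i = j then 0 else if i ∈ e ∧ j ∈ e then
          (1 / ((e.card : ℝ) - 1)) * (X i * X j) else 0) := by
    simp only [dotProduct, mulVec]
    refine Finset.sum_congr rfl fun i _ => ?_
    rw [Finset.mul_sum]
    refine Finset.sum_congr rfl fun j _ => ?_
    by_cases h : i = j
    · simp [h]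
    · rw [if_neg h]
      simp only [if_neg h]
      rw [Finset.sum_filter, Finset.sum_mul, Finset.mul_sum]
      refine Finset.sum_congr rfl fun e _ => ?_
      split_ifs <;> ring
  have step2 : (∑ i, ∑ j, ∑ e ∈ E, (if i = j then (0:ℝ) else if i ∈ e ∧ j ∈ e then
          (1 / ((e.card : ℝ) - 1)) * (X i * X j) else 0))
      = ∑ e ∈ E, ∑ i, ∑ j, (if i = j then 0 else if i ∈ e ∧ j ∈ e then
          (1 / ((e.card : ℝ) - 1)) * (X i * X j) else 0) :=
    (Finset.sum_congr rfl fun i _ => Finset.sum_comm).trans Finset.sum_comm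
  rw [step1, step2]
  refine Finset.sum_congr rfl fun e _ => ?_
  have key : ∀ i j : Fin n, (if i = j then (0:ℝ) else if i ∈ e ∧ j ∈ e then
        (1 / ((e.card : ℝ) - 1)) * (X i * X j) else 0)
      = if i ∈ e then (if j ∈ e then (if i = j then 0 else
        (1 / ((e.card : ℝ) - 1)) * (X i * X j)) else 0) else 0 := by
    intro i j
    by_cases hi : i ∈ e <;> by_cases hj : j ∈ e <;> by_cases hij : i = j <;>
      simp [hi, hj, hij]
  simp only [key]
  have pull : ∀ i : Fin n, (∑ j, if i ∈ e then (if j ∈ e then (if i = j then (0:ℝ) else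
        (1 / ((e.card : ℝ) - 1)) * (X i * X j)) else 0) else 0)
      = if i ∈ e then (∑ j, if j ∈ e then (if i = j then (0:ℝ) else
        (1 / ((e.card : ℝ) - 1)) * (X i * X j)) else 0) else 0 := by
    intro i; split_ifs <;> simp
  simp only [pull]
  rw [Finset.sum_ite_mem univ e, Finset.univ_inter]
  have inner : ∀ i, (∑ j, if j ∈ e then (if i = j then (0:ℝ) else
        (1 / ((e.card : ℝ) - 1)) * (X i * X j)) else 0)
      = ∑ j ∈ e, (if i = j then 0 else (1 / ((e.card : ℝ) - 1)) * (X i * X j)) := fun i => by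
    rw [Finset.sum_ite_mem univ e, Finset.univ_inter]
  simp only [inner]
  have split : ∀ i ∈ e, (∑ j ∈ e, if i = j then (0:ℝ) else (1 / ((e.card : ℝ) - 1)) * (X i * X j))
      = (∑ j ∈ e, (1 / ((e.card : ℝ) - 1)) * (X i * X j)) - (1 / ((e.card : ℝ) - 1)) * (X i * X i) := by
    intro i hi
    have : ∀ j, (if i = j then (0:ℝ) else (1 / ((e.card : ℝ) - 1)) * (X i * X j))
        = (1 / ((e.card : ℝ) - 1)) * (X i * X j) - (if i = j then (1 / ((e.card : ℝ) - 1)) * (X i * X j) else 0) := by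
      intro j; split_ifs <;> ring
    simp only [this, Finset.sum_sub_distrib, Finset.sum_ite_eq, if_pos hi]
  rw [Finset.sum_congr rfl split, Finset.sum_sub_distrib, ← Finset.mul_sum]
  have this1 : ∀ i, (∑ j ∈ e, (1 / ((e.card : ℝ) - 1)) * (X i * X j))
      = (1 / ((e.card : ℝ) - 1)) * (X i * ∑ j ∈ e, X j) := by
    intro i; rw [← Finset.mul_sum, ← Finset.mul_sum]
  simp only [this1]
  have h1 : ∑ x ∈ e, 1 / ((e.card:ℝ) - 1) * (X x * ∑ j ∈ e, X j)
      = 1 / ((e.card:ℝ) - 1) * ((∑ j ∈ e, X j) * ∑ j ∈ e, X j) := by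
    rw [← Finset.mul_sum, ← Finset.sum_mul]
  have h2 : ∑ i ∈ e, X i * X i = ∑ v ∈ e, X v ^ 2 :=
    Finset.sum_congr rfl fun i _ => (sq (X i)).symm
  rw [h1, h2]; ring


lemma adjMat_herm {n : ℕ} (G : FinHypergraph n) : G.adjMat.IsHermitian := by
  rw [Matrix.IsHermitian]
  ext i j
  simp only [Matrix.conjTranspose_apply, star_trivial]
  unfold FinHypergraph.adjMat
  by_cases h : i = j
  · subst h; simp
  · rw [if_neg (fun hh => h hh.symm), if_neg h]
    congr 1
    apply Finset.filter_congr
    intro s _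
    simp [and_comm]

lemma quadform {n : ℕ} (G : FinHypergraph n) (X : Fin n → ℝ) :
    X ⬝ᵥ (G.adjMat *ᵥ X) =
      ∑ e ∈ G.edges, (1 / ((e.card : ℝ) - 1)) * ((∑ v ∈ e, X v)^2 - ∑ v ∈ e, (X v)^2) :=
  quadform_aux G.edges X

lemma rayleigh_le {m : ℕ} {A : Matrix (Fin m) (Fin m) ℝ} (hA : A.IsHermitian)
    (X : Fin m → ℝ) (hunit : ∑ i, X i ^ 2 = 1) : X ⬝ᵥ (A *ᵥ X) ≤ specRad A := by
  classical
  set U : Matrix (Fin m) (Fin m) ℝ := (hA.eigenvectorUnitary : Matrix (Fin m) (Fin m) ℝ) with hU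
  set c : Fin m → ℝ := star U *ᵥ X with hc
  have hXX : X ⬝ᵥ X = 1 := by
    simpa [dotProduct, sq] using hunit
  have hUU : U * star U = 1 := (Matrix.mem_unitaryGroup_iff).mp hA.eigenvectorUnitary.2
  have hdot : ∀ y : Fin m → ℝ, X ⬝ᵥ (U *ᵥ y) = c ⬝ᵥ y := by
    intro y
    rw [Matrix.dotProduct_mulVec, hc]
    congr 1
    rw [← Matrix.mulVec_transpose]
    rfl
  have hcc : c ⬝ᵥ c = 1 := by
    rw [← hdot c, hc, Matrix.mulVec_mulVec, hUU, Matrix.one_mulVec, hXX]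
  have hform : X ⬝ᵥ (A *ᵥ X) = ∑ i, hA.eigenvalues i * c i ^ 2 := by
    conv_lhs => rw [hA.spectral_theorem, Unitary.conjStarAlgAut_apply]
    rw [← Matrix.mulVec_mulVec, ← Matrix.mulVec_mulVec, hdot]
    simp [dotProduct, Matrix.mulVec_diagonal, sq]
    exact Finset.sum_congr rfl fun i _ => by ring
  have hbdd : BddAbove (Set.range fun μ : spectrum ℝ A => |(μ : ℝ)|) :=
    (Set.finite_range _).bddAbove
  have hle : ∀ i, hA.eigenvalues i ≤ specRad A := by
    intro i
    refine le_trans (le_abs_self _) ?_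
    exact le_ciSup hbdd (⟨hA.eigenvalues i, hA.eigenvalues_mem_spectrum_real i⟩ : spectrum ℝ A)
  calc X ⬝ᵥ (A *ᵥ X) = ∑ i, hA.eigenvalues i * c i ^ 2 := hform
    _ ≤ ∑ i, specRad A * c i ^ 2 := by
        refine Finset.sum_le_sum fun i _ => ?_
        exact mul_le_mul_of_nonneg_right (hle i) (sq_nonneg _)
    _ = specRad A := by
        rw [← Finset.mul_sum]
        have : ∑ i, c i ^ 2 = 1 := by simpa [dotProduct, sq] using hcc
        rw [this, mul_one]

end Helpers

/-- edge-switching. For `G' = G⟨U₁ ⇌ V₁⟩`,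
`XᵀA_{G'}X - XᵀA_G X = (2/(k-1))(x_{U₁} - x_{V₁})(x_{V₂} - x_{U₂})`; consequently if
`G'` is connected, `x_{U₁} ≥ x_{V₁}` and `x_{U₂} ≤ x_{V₂}` then `ρ(G) ≤ ρ(G')`. -/
theorem stmt6 {n k r : ℕ} (hk : 2 ≤ k) (hr1 : 1 ≤ r) (hrk : r ≤ k - 1)
    (G G' : FinHypergraph n) (huni : G.IsUniform k) (huni' : G'.IsUniform k)
    (hconn : G.Connected)
    (e f : Finset (Fin n)) (he : e ∈ G.edges) (hf : f ∈ G.edges) (hef : e ≠ f)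
    (U1 V1 : Finset (Fin n)) (hU1 : U1 ⊆ e) (hV1 : V1 ⊆ f)
    (hU1card : U1.card = r) (hV1card : V1.card = r)
    (henew : (e \ U1) ∪ V1 ∉ G.edges) (hfnew : (f \ V1) ∪ U1 ∉ G.edges)
    (hnewne : (e \ U1) ∪ V1 ≠ (f \ V1) ∪ U1)
    (hG' : G'.edges = (G.edges \ {e, f}) ∪ {(e \ U1) ∪ V1, (f \ V1) ∪ U1})
    (X : Fin n → ℝ) (hpos : ∀ i, 0 < X i) (hunit : ∑ i, X i ^ 2 = 1)
    (hX : G.adjMat *ᵥ X = specRad G.adjMat • X) :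
    X ⬝ᵥ (G'.adjMat *ᵥ X) - X ⬝ᵥ (G.adjMat *ᵥ X) =
      2 / ((k : ℝ) - 1) * ((∑ v ∈ U1, X v) - ∑ v ∈ V1, X v) *
        ((∑ v ∈ f \ V1, X v) - ∑ v ∈ e \ U1, X v) ∧
    (G'.Connected → (∑ v ∈ V1, X v) ≤ (∑ v ∈ U1, X v) →
      (∑ v ∈ e \ U1, X v) ≤ (∑ v ∈ f \ V1, X v) →
      specRad G.adjMat ≤ specRad G'.adjMat) := by
  classical
  set A := G.adjMat
  set A' := G'.adjMat
  set e' := (e \ U1) ∪ V1 with he'def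
  set f' := (f \ V1) ∪ U1 with hf'def
  have he' : e' ∈ G'.edges := by
    rw [hG']; exact Finset.mem_union_right _ (Finset.mem_insert_self _ _)
  have hf' : f' ∈ G'.edges := by
    rw [hG']
    exact Finset.mem_union_right _ (Finset.mem_insert_of_mem (Finset.mem_singleton_self _))
  have hce : e.card = k := huni e he
  have hcf : f.card = k := huni f hf
  have hce' : e'.card = k := huni' e' he'
  have hcf' : f'.card = k := huni' f' hf'
  have hrklt : r ≤ k := hrk.trans (Nat.sub_le k 1)
  have hcardeU : (e \ U1).card = k - r := by rw [Finset.card_sdiff_of_subset hU1, hU1card, hce]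
  have hcardfV : (f \ V1).card = k - r := by rw [Finset.card_sdiff_of_subset hV1, hV1card, hcf]
  have hdisj1 : Disjoint (e \ U1) V1 := by
    rw [← Finset.card_union_eq_card_add_card, ← he'def, hce', hcardeU, hV1card,
      Nat.sub_add_cancel hrklt]
  have hdisj2 : Disjoint (f \ V1) U1 := by
    rw [← Finset.card_union_eq_card_add_card, ← hf'def, hcf', hcardfV, hU1card,
      Nat.sub_add_cancel hrklt]
  have hk1 : ((k : ℝ) - 1) ≠ 0 := by
    have : (2 : ℝ) ≤ (k : ℝ) := by exact_mod_cast hk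
    linarith
  set Q : Finset (Fin n) → ℝ :=
    fun s => (1 / ((s.card : ℝ) - 1)) * ((∑ v ∈ s, X v)^2 - ∑ v ∈ s, (X v)^2) with hQ
  have hsubef : ({e, f} : Finset (Finset (Fin n))) ⊆ G.edges := by
    rw [Finset.insert_subset_iff, Finset.singleton_subset_iff]; exact ⟨he, hf⟩
  have hdisjE : Disjoint (G.edges \ {e, f}) ({e', f'} : Finset (Finset (Fin n))) := by
    rw [Finset.disjoint_right]
    intro s hs hs2
    have hsE : s ∈ G.edges := (Finset.mem_sdiff.mp hs2).1
    rcases Finset.mem_insert.mp hs with h | h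
    · exact henew (h ▸ hsE)
    · exact hfnew ((Finset.mem_singleton.mp h) ▸ hsE)
  have hsumG' : X ⬝ᵥ (A' *ᵥ X) = (∑ s ∈ G.edges \ {e, f}, Q s) + (Q e' + Q f') := by
    rw [quadform G' X, hG', Finset.sum_union hdisjE, Finset.sum_pair hnewne]
  have hsumG : X ⬝ᵥ (A *ᵥ X) = (∑ s ∈ G.edges \ {e, f}, Q s) + (Q e + Q f) := by
    rw [quadform G X, ← Finset.sum_sdiff hsubef, Finset.sum_pair hef]
  have hsume : ∑ v ∈ e, X v = (∑ v ∈ e \ U1, X v) + ∑ v ∈ U1, X v := (Finset.sum_sdiff hU1).symm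
  have hsume2 : ∑ v ∈ e, (X v)^2 = (∑ v ∈ e \ U1, (X v)^2) + ∑ v ∈ U1, (X v)^2 :=
    (Finset.sum_sdiff hU1).symm
  have hsumf : ∑ v ∈ f, X v = (∑ v ∈ f \ V1, X v) + ∑ v ∈ V1, X v := (Finset.sum_sdiff hV1).symm
  have hsumf2 : ∑ v ∈ f, (X v)^2 = (∑ v ∈ f \ V1, (X v)^2) + ∑ v ∈ V1, (X v)^2 :=
    (Finset.sum_sdiff hV1).symm
  have hsume' : ∑ v ∈ e', X v = (∑ v ∈ e \ U1, X v) + ∑ v ∈ V1, X v :=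
    Finset.sum_union hdisj1
  have hsume'2 : ∑ v ∈ e', (X v)^2 = (∑ v ∈ e \ U1, (X v)^2) + ∑ v ∈ V1, (X v)^2 :=
    Finset.sum_union hdisj1
  have hsumf' : ∑ v ∈ f', X v = (∑ v ∈ f \ V1, X v) + ∑ v ∈ U1, X v :=
    Finset.sum_union hdisj2
  have hsumf'2 : ∑ v ∈ f', (X v)^2 = (∑ v ∈ f \ V1, (X v)^2) + ∑ v ∈ U1, (X v)^2 :=
    Finset.sum_union hdisj2
  have hId : X ⬝ᵥ (A' *ᵥ X) - X ⬝ᵥ (A *ᵥ X) =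
      2 / ((k : ℝ) - 1) * ((∑ v ∈ U1, X v) - ∑ v ∈ V1, X v) *
        ((∑ v ∈ f \ V1, X v) - ∑ v ∈ e \ U1, X v) := by
    rw [hsumG', hsumG]
    have hQe : Q e = (1 / ((k : ℝ) - 1)) *
        (((∑ v ∈ e \ U1, X v) + ∑ v ∈ U1, X v)^2 -
          ((∑ v ∈ e \ U1, (X v)^2) + ∑ v ∈ U1, (X v)^2)) := by
      rw [hQ]; dsimp only; rw [hce, hsume, hsume2]
    have hQf : Q f = (1 / ((k : ℝ) - 1)) *
        (((∑ v ∈ f \ V1, X v) + ∑ v ∈ V1, X v)^2 -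
          ((∑ v ∈ f \ V1, (X v)^2) + ∑ v ∈ V1, (X v)^2)) := by
      rw [hQ]; dsimp only; rw [hcf, hsumf, hsumf2]
    have hQe' : Q e' = (1 / ((k : ℝ) - 1)) *
        (((∑ v ∈ e \ U1, X v) + ∑ v ∈ V1, X v)^2 -
          ((∑ v ∈ e \ U1, (X v)^2) + ∑ v ∈ V1, (X v)^2)) := by
      rw [hQ]; dsimp only; rw [hce', hsume', hsume'2]
    have hQf' : Q f' = (1 / ((k : ℝ) - 1)) *
        (((∑ v ∈ f \ V1, X v) + ∑ v ∈ U1, X v)^2 -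
          ((∑ v ∈ f \ V1, (X v)^2) + ∑ v ∈ U1, (X v)^2)) := by
      rw [hQ]; dsimp only; rw [hcf', hsumf', hsumf'2]
    rw [hQe, hQf, hQe', hQf']
    field_simp
    ring
  refine ⟨hId, fun _ h1 h2 => ?_⟩
  have hρ : X ⬝ᵥ (A *ᵥ X) = specRad A := by
    rw [hX]
    have : X ⬝ᵥ (specRad A • X) = specRad A * ∑ i, X i * X i := by
      simp [dotProduct, Finset.mul_sum]
      exact Finset.sum_congr rfl fun i _ => by ring
    rw [this]
    have h1' : ∑ i, X i * X i = 1 := by simpa [sq] using hunit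
    rw [h1', mul_one]
  have hnonneg : 0 ≤ 2 / ((k : ℝ) - 1) * ((∑ v ∈ U1, X v) - ∑ v ∈ V1, X v) *
      ((∑ v ∈ f \ V1, X v) - ∑ v ∈ e \ U1, X v) := by
    have h2le : (2 : ℝ) ≤ (k : ℝ) := by exact_mod_cast hk
    have hpos2 : (0:ℝ) ≤ 2 / ((k : ℝ) - 1) :=
      div_nonneg (by norm_num) (by linarith)
    exact mul_nonneg (mul_nonneg hpos2 (sub_nonneg.mpr h1)) (sub_nonneg.mpr h2)
  have hray : X ⬝ᵥ (A' *ᵥ X) ≤ specRad A' := rayleigh_le (adjMat_herm G') X hunit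
  linarith
end

section
/- In a k-uniform unicyclic hypergraph G whose unique hypercycle C has length L(C) ≥ 3, any two edges of G intersect in at most one vertex. -/
open Matrix BigOperators

open FinHypergraph

/-- in a k-uniform unicyclic hypergraph whose unique hypercycle has
length at least 3, any two edges meet in at most one vertex. -/
theorem stmt10 {n k : ℕ} (hk : 2 ≤ k) (G : FinHypergraph n) (hG : IsUnicyclic k G)
    (q : ℕ) (v : ℕ → Fin n) (e : ℕ → Finset (Fin n)) (hC : G.IsCycle q v e)
    (hq : 3 ≤ q) :
    ∀ f1 ∈ G.edges, ∀ f2 ∈ G.edges, f1 ≠ f2 → (f1 ∩ f2).card ≤ 1 := by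
  
  intro f1 hf1 f2 hf2 hne
  by_contra hcard
  push_neg at hcard
  obtain ⟨a, ha, b, hb, hab⟩ := Finset.one_lt_card.mp hcard
  obtain ⟨-, hvinj, heinj, hemem, hve, hcons, hdisj⟩ := hC
  obtain ⟨hunif, hconn, hcount⟩ := hG
  obtain ⟨k', rfl⟩ : ∃ k', k = k' + 1 := ⟨k - 1, by omega⟩
  have hk' : 1 ≤ k' := by omega
  have hkcard : ∀ g ∈ G.edges, g.card = k' + 1 := hunif
  set m := G.edges.card with hm
  have he0 : e 0 ∈ G.edges := hemem 0 (by omega)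
  have hv00 : v 0 ∈ e 0 := (hve 0 (by omega)).1
  have haf1 : a ∈ f1 := (Finset.mem_inter.mp ha).1
  have haf2 : a ∈ f2 := (Finset.mem_inter.mp ha).2
  have hbf1 : b ∈ f1 := (Finset.mem_inter.mp hb).1
  have hbf2 : b ∈ f2 := (Finset.mem_inter.mp hb).2
  -- every vertex is covered by some edge
  have covers : ∀ x : Fin n, ∃ g ∈ G.edges, x ∈ g := by
    intro x
    have walk := hconn (v 0) x
    induction walk with
    | refl => exact ⟨e 0, he0, hv00⟩
    | tail h1 h2 ih =>
      obtain ⟨g, hg, _, hcg⟩ := h2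
      exact ⟨g, hg, hcg⟩
  -- connectivity expansion lemma
  have expand : ∀ S : Finset (Finset (Fin n)), S ⊆ G.edges → (S.biUnion id).Nonempty →
      S ≠ G.edges → ∃ g ∈ G.edges, g ∉ S ∧ (g ∩ S.biUnion id).Nonempty := by
    intro S hS hSne hSneq
    obtain ⟨v0, hv0⟩ := hSne
    obtain ⟨g0, hg0, hg0S⟩ : ∃ g ∈ G.edges, g ∉ S := by
      by_contra hcon
      push_neg at hcon
      exact hSneq (Finset.Subset.antisymm hS hcon)
    obtain ⟨w, hw⟩ : g0.Nonempty :=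
      Finset.card_pos.mp (by have := G.two_le_card g0 hg0; omega)
    have walk := hconn v0 w
    have key : ∀ x : Fin n,
        Relation.ReflTransGen (fun a b => ∃ e ∈ G.edges, a ∈ e ∧ b ∈ e) v0 x →
        x ∈ S.biUnion id ∨ ∃ g ∈ G.edges, g ∉ S ∧ (g ∩ S.biUnion id).Nonempty := by
      intro x hx
      induction hx with
      | refl => exact Or.inl hv0
      | tail h1 h2 ih =>
        rcases ih with hmem | hdone
        · obtain ⟨g, hg, hbg, hcg⟩ := h2
          by_cases hgS : g ∈ S
          · exact Or.inl (Finset.mem_biUnion.mpr ⟨g, hgS, hcg⟩)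
          · exact Or.inr ⟨g, hg, hgS, ⟨_, Finset.mem_inter.mpr ⟨hbg, hmem⟩⟩⟩
        · exact Or.inr hdone
    rcases key w walk with hw' | hdone
    · exact ⟨g0, hg0, hg0S, ⟨w, Finset.mem_inter.mpr ⟨hw, hw'⟩⟩⟩
    · exact hdone
  set Cyc := (Finset.range q).image e with hCycdef
  have hCycsub : Cyc ⊆ G.edges := by
    intro g hg
    obtain ⟨i, hi, rfl⟩ := Finset.mem_image.mp hg
    exact hemem i (Finset.mem_range.mp hi)
  have hCyccard : Cyc.card = q := by
    rw [hCycdef, Finset.card_image_of_injOn, Finset.card_range]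
    intro i hi j hj hij
    exact heinj i (by simpa using hi) j (by simpa using hj) hij
  have hmemC : ∀ i < q, e i ∈ Cyc := fun i hi =>
    Finset.mem_image.mpr ⟨i, Finset.mem_range.mpr hi, rfl⟩
  -- growth step for cycle prefixes
  have hstep : ∀ t < q,
      ((((Finset.range (t+1)).image e).biUnion id).card
        + ((e t) ∩ (((Finset.range t).image e).biUnion id)).card
        = (k' + 1) + (((Finset.range t).image e).biUnion id).card) := by
    intro t htq
    have h1 : (Finset.range (t+1)).image e = insert (e t) ((Finset.range t).image e) := by
      rw [Finset.range_add_one, Finset.image_insert]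
    rw [h1, Finset.biUnion_insert]
    have h := Finset.card_union_add_card_inter (e t) (((Finset.range t).image e).biUnion id)
    rw [hkcard (e t) (hemem t htq)] at h
    simpa using h
  have claim1 : ∀ t, 1 ≤ t → t < q →
      (((Finset.range t).image e).biUnion id).card ≤ k' * t + 1 := by
    intro t ht1
    induction t, ht1 using Nat.le_induction with
    | base =>
      intro _
      have h1 : (Finset.range 1).image e = {e 0} := by simp
      rw [h1, Finset.singleton_biUnion, id_eq, hkcard (e 0) he0]
      omega
    | succ t ht ih =>
      intro htq
      have hb := ih (by omega)
      have hs := hstep t (by omega)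
      have hv' : v t ∈ (e t) ∩ (((Finset.range t).image e).biUnion id) := by
        refine Finset.mem_inter.mpr ⟨(hve t (by omega)).1, Finset.mem_biUnion.mpr
          ⟨e (t-1), Finset.mem_image.mpr ⟨t-1, Finset.mem_range.mpr (by omega), rfl⟩, ?_⟩⟩
        have h2 := (hve (t-1) (by omega)).2
        have ht' : t - 1 + 1 = t := by omega
        rw [ht', Nat.mod_eq_of_lt (by omega)] at h2
        exact h2
      have hcpos : 1 ≤ ((e t) ∩ (((Finset.range t).image e).biUnion id)).card :=
        Finset.card_pos.mpr ⟨v t, hv'⟩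
      rw [Nat.mul_succ]
      set A := k' * t
      omega
  -- union of the whole cycle
  have hcycb : (Cyc.biUnion id).card ≤ k' * q := by
    have hq1 : q - 1 < q := by omega
    have hs := hstep (q-1) hq1
    have hq' : q - 1 + 1 = q := by omega
    rw [hq'] at hs
    have hc1 := claim1 (q-1) (by omega) hq1
    have h2le : 2 ≤ ((e (q-1)) ∩ (((Finset.range (q-1)).image e).biUnion id)).card := by
      apply Finset.one_lt_card.mpr
      refine ⟨v (q-1), Finset.mem_inter.mpr ⟨(hve (q-1) hq1).1, ?_⟩,
        v 0, Finset.mem_inter.mpr ⟨?_, ?_⟩, ?_⟩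
      · refine Finset.mem_biUnion.mpr ⟨e (q-2),
          Finset.mem_image.mpr ⟨q-2, Finset.mem_range.mpr (by omega), rfl⟩, ?_⟩
        have h2 := (hve (q-2) (by omega)).2
        have ht' : q - 2 + 1 = q - 1 := by omega
        rw [ht', Nat.mod_eq_of_lt (by omega)] at h2
        exact h2
      · have h2 := (hve (q-1) hq1).2
        rw [hq', Nat.mod_self] at h2
        exact h2
      · exact Finset.mem_biUnion.mpr ⟨e 0,
          Finset.mem_image.mpr ⟨0, Finset.mem_range.mpr (by omega), rfl⟩, hv00⟩
      · intro heq
        have := hvinj (q-1) hq1 0 (by omega) heq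
        omega
    have hmul : k' * q = k' * (q - 1) + k' := by
      conv_lhs => rw [show q = (q-1)+1 by omega]
      rw [Nat.mul_succ]
    rw [hCycdef, hmul]
    set A := k' * (q-1)
    omega
  -- f1 and f2 cannot both be cycle edges
  have notboth : ¬ (f1 ∈ Cyc ∧ f2 ∈ Cyc) := by
    rintro ⟨h1, h2⟩
    obtain ⟨i, hi, hei⟩ := Finset.mem_image.mp h1
    obtain ⟨j, hj, hej⟩ := Finset.mem_image.mp h2
    rw [Finset.mem_range] at hi hj
    have hij : i ≠ j := fun h => hne (by rw [← hei, ← hej, h])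
    by_cases hc1 : (i+1) % q = j
    · have hx := hcons hq i hi
      rw [hc1, hei, hej] at hx
      have ha' : a = v j := by
        have := ha; rw [hx] at this; exact Finset.mem_singleton.mp this
      have hb' : b = v j := by
        have := hb; rw [hx] at this; exact Finset.mem_singleton.mp this
      exact hab (ha'.trans hb'.symm)
    · by_cases hc2 : (j+1) % q = i
      · have hx := hcons hq j hj
        rw [hc2, hej, hei] at hx
        have ha2 : a ∈ f2 ∩ f1 := Finset.mem_inter.mpr ⟨haf2, haf1⟩
        have hb2 : b ∈ f2 ∩ f1 := Finset.mem_inter.mpr ⟨hbf2, hbf1⟩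
        have ha' : a = v i := by rw [hx] at ha2; exact Finset.mem_singleton.mp ha2
        have hb' : b = v i := by rw [hx] at hb2; exact Finset.mem_singleton.mp hb2
        exact hab (ha'.trans hb'.symm)
      · have hx := hdisj i hi j hj hij hc1 hc2
        rw [hei, hej] at hx
        rw [hx] at ha
        exact absurd ha (Finset.notMem_empty a)
  -- main induction
  have main : ∀ j, q + j ≤ m → ∃ S : Finset (Finset (Fin n)),
      (∀ i < q, e i ∈ S) ∧ S ⊆ G.edges ∧ S.card = q + j ∧
      (S.biUnion id).card + (if f1 ∈ S ∧ f2 ∈ S then 1 else 0) ≤ k' * (q + j) := by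
    intro j
    induction j with
    | zero =>
      intro _
      refine ⟨Cyc, hmemC, hCycsub, by simpa using hCyccard, ?_⟩
      rw [if_neg notboth]
      simpa using hcycb
    | succ j ih =>
      intro hjm
      obtain ⟨S, hSC, hSsub, hScard, hSbound⟩ := ih (by omega)
      have hSne : S ≠ G.edges := by
        intro h
        rw [h] at hScard
        omega
      have hBne : (S.biUnion id).Nonempty :=
        ⟨v 0, Finset.mem_biUnion.mpr ⟨e 0, hSC 0 (by omega), hv00⟩⟩
      obtain ⟨g, hg, hgS, hgB⟩ := expand S hSsub hBne hSne
      refine ⟨insert g S, fun i hi => Finset.mem_insert_of_mem (hSC i hi),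
        Finset.insert_subset hg hSsub,
        by rw [Finset.card_insert_of_notMem hgS, hScard]; omega, ?_⟩
      have hgrow : ((insert g S).biUnion id).card + (g ∩ S.biUnion id).card
          = (k' + 1) + (S.biUnion id).card := by
        rw [Finset.biUnion_insert]
        have h := Finset.card_union_add_card_inter g (S.biUnion id)
        rw [hkcard g hg] at h
        simpa using h
      have hc1 : 1 ≤ (g ∩ S.biUnion id).card := Finset.card_pos.mpr hgB
      have hmulq : k' * (q + (j+1)) = k' * (q + j) + k' := by
        rw [show q + (j+1) = (q+j)+1 by omega, Nat.mul_succ]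
      rw [hmulq]
      by_cases hnew : f1 ∈ insert g S ∧ f2 ∈ insert g S
      · rw [if_pos hnew]
        by_cases hold : f1 ∈ S ∧ f2 ∈ S
        · rw [if_pos hold] at hSbound
          set A := k' * (q + j)
          omega
        · have hcase : (g = f1 ∧ f2 ∈ S) ∨ (g = f2 ∧ f1 ∈ S) := by
            rcases Finset.mem_insert.mp hnew.1 with h1 | h1 <;>
              rcases Finset.mem_insert.mp hnew.2 with h2 | h2
            · exact absurd (h1.trans h2.symm) hne
            · exact Or.inl ⟨h1.symm, h2⟩
            · exact Or.inr ⟨h2.symm, h1⟩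
            · exact absurd ⟨h1, h2⟩ hold
          have h2c : 2 ≤ (g ∩ S.biUnion id).card := by
            apply Finset.one_lt_card.mpr
            rcases hcase with ⟨hgf, hfS⟩ | ⟨hgf, hfS⟩
            · exact ⟨a, Finset.mem_inter.mpr ⟨hgf ▸ haf1,
                Finset.mem_biUnion.mpr ⟨f2, hfS, haf2⟩⟩,
                b, Finset.mem_inter.mpr ⟨hgf ▸ hbf1,
                Finset.mem_biUnion.mpr ⟨f2, hfS, hbf2⟩⟩, hab⟩
            · exact ⟨a, Finset.mem_inter.mpr ⟨hgf ▸ haf2,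
                Finset.mem_biUnion.mpr ⟨f1, hfS, haf1⟩⟩,
                b, Finset.mem_inter.mpr ⟨hgf ▸ hbf2,
                Finset.mem_biUnion.mpr ⟨f1, hfS, hbf1⟩⟩, hab⟩
          rw [if_neg hold] at hSbound
          set A := k' * (q + j)
          omega
      · rw [if_neg hnew]
        have hub : (S.biUnion id).card ≤ k' * (q + j) :=
          le_trans (Nat.le_add_right _ _) hSbound
        set A := k' * (q + j)
        omega
  have hqm : q ≤ m := hCyccard ▸ Finset.card_le_card hCycsub
  obtain ⟨S, hSC, hSsub, hScard, hSbound⟩ := main (m - q) (by omega)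
  have hSeq : S = G.edges := Finset.eq_of_subset_of_card_le hSsub (by omega)
  rw [hSeq] at hSbound
  rw [if_pos ⟨hf1, hf2⟩] at hSbound
  have huniv : G.edges.biUnion id = Finset.univ := by
    apply Finset.eq_univ_iff_forall.mpr
    intro x
    obtain ⟨g, hg, hxg⟩ := covers x
    exact Finset.mem_biUnion.mpr ⟨g, hg, hxg⟩
  rw [huniv, Finset.card_univ, Fintype.card_fin,
    show q + (m - q) = m by omega] at hSbound
  have hn : (n : ℤ) = (k' : ℤ) * m := by
    push_cast at hcount
    linarith
  have hn' : n = k' * m := by exact_mod_cast hn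
  rw [← hn'] at hSbound
  omega
end
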